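/- Let A_N be the power series algebra \mathbb{C}[q,q^{-1}]\{\{t_1,\ldots,t_N\}\} modulo the ideal generated by t_i t_{i+1} - q t_{i+1} t_i (1 \leq i < N) and t_i t_j - t_j t_i for |i-j| \geq 2. Then the nested quantum continued fraction (1 - (1 - (1 - \cdots (1-t_N)^{-1} t_{N-1})^{-1} \cdots t_2)^{-1} t_1)^{-1} equals \sum_{\alpha_1,\ldots,\alpha_N \geq 0} F_q(\alpha_1,\ldots,\alpha_N) t_N^{\alpha_N} \cdots t_1^{\alpha_1}, where F_q(a_1,\ldots,a_N) = \prod_{i=1}^{N} \binom{a_i + a_{i+1} - 1}{a_{i+1}}_q (with a_{N+1} = 0). -/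

import Mathlib

open LaurentPolynomial

/-- The base ring `ℂ[q,q⁻¹]`. -/
abbrev Rq : Type := LaurentPolynomial ℂ

/-- The Gaussian (q-)binomial coefficient (q-Pascal recurrence). -/
def qChoose {R : Type*} [CommRing R] (q : R) : ℕ → ℕ → R
  | _, 0 => 1
  | 0, _ + 1 => 0
  | n + 1, k + 1 => qChoose q n k + q ^ (k + 1) * qChoose q n (k + 1)

/-- Extension of a tuple `a : Fin N → ℕ` by zero (`a_{N+1} = 0`). -/
def aext {N : ℕ} (a : Fin N → ℕ) (i : ℕ) : ℕ := if h : i < N then a ⟨i, h⟩ else 0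

/-- `F_q(a_1,…,a_N) = ∏_{i=1}^N C_q(a_i + a_{i+1} - 1, a_{i+1})` with `a_{N+1} = 0`. -/
def Fq {R : Type*} [CommRing R] (q : R) {N : ℕ} (a : Fin N → ℕ) : R :=
  ∏ i ∈ Finset.range N, qChoose q (aext a i + aext a (i + 1) - 1) (aext a (i + 1))

/-- The nested quantum continued fraction
`nest [t₁, …, t_N] = (1 - (1 - ⋯ (1 - t_N)⁻¹ t_{N-1} ⋯)⁻¹ t₁)⁻¹`. -/
noncomputable def nest {A : Type*} [Ring A] : List A → A
  | [] => 1
  | t :: rest => Ring.inverse (1 - nest rest * t)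

/-!
Write `t₁ = t 0`, and let `B` be the continued fraction of `t₂, …, t_N`, so that the whole fraction
is `(1 - B t₁ X)⁻¹`. Conjugation by `t₁` multiplies `t₂` by `q` and fixes `t₃, …, t_N`, hence
`t₁ B_r = B_{r+1} t₁`, where `B_r` is `B` with `t₂` replaced by `q^r t₂`. Moving all the `t₁` to the
right yields a noncommutative q-binomial theorem
`∏_{j<k} (1 - B q^j t₁ X)⁻¹ = ∑_m [k+m-1, m]_q B₀ B₁ ⋯ B_{m-1} t₁^m X^m`,
which is checked by multiplying by `1 - B q^k t₁ X` and using the second q-Pascal rule.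
The left side is the product of the continued fractions with `t₁` replaced by `q^j t₁`, `j < k`, and
on the right the same kind of product appears one level down. So induction on `N` shows that this
product equals `∑_α [k+α₁-1, α₁]_q F_q(α) t_N^{α_N} ⋯ t₁^{α₁} X^{|α|}` for every `k`; the
coefficient `[k+α₁-1, α₁]_q F_q(α)` is `Fq q (Fin.cons k α)`, and `k = 1` is the theorem.
-/

section QChoose

variable {R : Type*} [CommRing R] (q : R)

theorem qChoose_zero_right (n : ℕ) : qChoose q n 0 = 1 := by
  cases n <;> rfl

theorem qChoose_succ_succ (n k : ℕ) :
    qChoose q (n + 1) (k + 1) = qChoose q n k + q ^ (k + 1) * qChoose q n (k + 1) := rfl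

theorem qChoose_eq_zero_of_lt {n k : ℕ} (h : n < k) : qChoose q n k = 0 := by
  induction n generalizing k with
  | zero => obtain ⟨k, rfl⟩ := Nat.exists_eq_add_one_of_ne_zero (by omega : k ≠ 0); rfl
  | succ n ih =>
    obtain ⟨k, rfl⟩ := Nat.exists_eq_add_one_of_ne_zero (by omega : k ≠ 0)
    rw [qChoose_succ_succ, ih (by omega), ih (by omega), mul_zero, add_zero]

theorem qChoose_self (n : ℕ) : qChoose q n n = 1 := by
  induction n with
  | zero => rfl
  | succ n ih =>
    rw [qChoose_succ_succ, ih, qChoose_eq_zero_of_lt q (by omega), mul_zero, add_zero]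

theorem qChoose_succ_one (n : ℕ) : qChoose q (n + 1) 1 = q ^ n + qChoose q n 1 := by
  induction n with
  | zero => simp [qChoose_succ_succ, qChoose_zero_right, qChoose_eq_zero_of_lt]
  | succ n ih =>
    have e₁ := qChoose_succ_succ q (n + 1) 0
    have e₂ := qChoose_succ_succ q n 0
    simp only [zero_add, qChoose_zero_right, pow_one] at e₁ e₂
    linear_combination e₁ + q * ih - e₂

theorem qChoose_add_succ_succ (n k : ℕ) :
    qChoose q (n + k + 1) (k + 1) = q ^ n * qChoose q (n + k) k + qChoose q (n + k) (k + 1) := by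
  induction n generalizing k with
  | zero => simp [qChoose_succ_succ q k k, qChoose_self, qChoose_eq_zero_of_lt]
  | succ n ihn =>
    induction k with
    | zero => simpa [qChoose_zero_right] using qChoose_succ_one q (n + 1)
    | succ k ihk =>
      have hn := ihn (k + 1)
      rw [show n + (k + 1) = n + 1 + k by omega] at hn
      rw [show n + 1 + (k + 1) = n + 1 + k + 1 by omega]
      linear_combination qChoose_succ_succ q (n + 1 + k + 1) (k + 1) + ihk + q ^ (k + 2) * hn
        - q ^ (n + 1) * qChoose_succ_succ q (n + 1 + k) k - qChoose_succ_succ q (n + 1 + k) (k + 1)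

end QChoose

section Fq

variable {R : Type*} [CommRing R] (q : R) {N : ℕ}

theorem aext_cons_zero (m : ℕ) (b : Fin N → ℕ) : aext (Fin.cons m b : Fin (N + 1) → ℕ) 0 = m := by
  simp [aext]

theorem aext_cons_succ (m : ℕ) (b : Fin N → ℕ) (i : ℕ) :
    aext (Fin.cons m b : Fin (N + 1) → ℕ) (i + 1) = aext b i := by
  by_cases h : i < N
  · simp [aext, h, Fin.cons]
  · simp [aext, h]

theorem Fq_cons (m : ℕ) (b : Fin N → ℕ) :
    Fq q (Fin.cons m b : Fin (N + 1) → ℕ) = qChoose q (m + aext b 0 - 1) (aext b 0) * Fq q b := by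
  simp only [Fq, Finset.prod_range_succ', aext_cons_zero, aext_cons_succ, mul_comm]

theorem Fq_cons_cons (k m : ℕ) (b : Fin N → ℕ) :
    Fq q (Fin.cons k (Fin.cons m b : Fin (N + 1) → ℕ) : Fin (N + 2) → ℕ) =
      qChoose q (k + m - 1) m * Fq q (Fin.cons m b : Fin (N + 1) → ℕ) := by
  rw [Fq_cons q k, aext_cons_zero]

theorem Fq_cons_one (a : Fin N → ℕ) : Fq q (Fin.cons 1 a : Fin (N + 1) → ℕ) = Fq q a := by
  rw [Fq_cons, Nat.add_sub_cancel_left, qChoose_self, one_mul]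

theorem Fq_singleton (k : ℕ) : Fq q ![k] = 1 := by
  simp [aext, Fq, qChoose_zero_right]

end Fq

theorem Finset.Nat.sum_antidiagonalTuple_succ {M : Type*} [AddCommMonoid M] (N n : ℕ)
    (f : (Fin (N + 1) → ℕ) → M) :
    ∑ a ∈ antidiagonalTuple (N + 1) n, f a =
      ∑ m ∈ range (n + 1), ∑ b ∈ antidiagonalTuple N (n - m), f (Fin.cons m b) := by
  rw [Finset.sum_sigma']
  refine Finset.sum_nbij' (fun a => ⟨a 0, Fin.tail a⟩) (fun p => Fin.cons p.1 p.2) ?_ ?_ ?_ ?_ ?_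
  · intro a ha
    simp only [mem_sigma, mem_range, mem_antidiagonalTuple, Fin.sum_univ_succ] at ha ⊢
    exact ⟨by omega, by simp only [Fin.tail]; omega⟩
  · rintro ⟨m, b⟩ h
    simp only [mem_sigma, mem_range, mem_antidiagonalTuple, Fin.sum_univ_succ,
      Fin.cons_zero, Fin.cons_succ] at h ⊢
    omega
  · intro a _
    exact Fin.cons_self_tail a
  · rintro ⟨m, b⟩ _
    simp
  · intro a _
    rw [Fin.cons_self_tail]

section Nest

variable {B : Type*} [Ring B]

theorem Commute.ring_inverse_right {x y : B} (h : Commute x y) : Commute x (Ring.inverse y) := by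
  by_cases hy : IsUnit y
  · obtain ⟨u, rfl⟩ := hy
    rw [Ring.inverse_unit]
    exact h.units_inv_right
  · rw [Ring.inverse_non_unit _ hy]
    exact Commute.zero_right x

theorem commute_nest {x : B} {l : List B} (h : ∀ y ∈ l, Commute x y) : Commute x (nest l) := by
  induction l with
  | nil => exact Commute.one_right x
  | cons a l ih =>
    simp only [List.mem_cons, forall_eq_or_imp] at h
    exact ((Commute.one_right x).sub_right ((ih h.2).mul_right h.1)).ring_inverse_right

theorem SemiconjBy.ring_inverse {g y z : B} (hy : IsUnit y) (hz : IsUnit z) (h : SemiconjBy g y z) :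
    SemiconjBy g (Ring.inverse y) (Ring.inverse z) := by
  obtain ⟨u, rfl⟩ := hy
  obtain ⟨v, rfl⟩ := hz
  rw [Ring.inverse_unit, Ring.inverse_unit]
  exact h.units_inv_right

theorem SemiconjBy.nest_cons {g a b : B} {l : List B} (hl : ∀ y ∈ l, Commute g y)
    (hab : SemiconjBy g a b) (ha : IsUnit (1 - nest l * a)) (hb : IsUnit (1 - nest l * b)) :
    SemiconjBy g (nest (a :: l)) (nest (b :: l)) :=
  (SemiconjBy.sub_right (Commute.one_right g)
    (SemiconjBy.mul_right (commute_nest hl) hab)).ring_inverse ha hb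

end Nest

namespace PowerSeries

variable {R : Type*} [CommRing R] {A : Type*} [Ring A] [Algebra R A]

/-- `sumXPow g = ∑ₘ g m * X ^ m`, a sum which converges `X`-adically. -/
noncomputable def sumXPow (g : ℕ → A⟦X⟧) : A⟦X⟧ :=
  mk fun n => ∑ i ∈ Finset.range (n + 1), coeff (n - i) (g i)

theorem coeff_sumXPow (g : ℕ → A⟦X⟧) (n : ℕ) :
    coeff n (sumXPow g) = ∑ i ∈ Finset.range (n + 1), coeff (n - i) (g i) :=
  coeff_mk _ _

theorem sumXPow_zero : sumXPow (fun _ => (0 : A⟦X⟧)) = 0 := by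
  ext n
  simp [coeff_sumXPow]

theorem sumXPow_sub (g h : ℕ → A⟦X⟧) :
    sumXPow (fun m => g m - h m) = sumXPow g - sumXPow h := by
  ext n
  simp [coeff_sumXPow, Finset.sum_sub_distrib]

theorem sumXPow_eq_add_sumXPow_succ_mul_X (g : ℕ → A⟦X⟧) :
    sumXPow g = g 0 + sumXPow (fun m => g (m + 1)) * X := by
  ext n
  cases n with
  | zero => simp [coeff_sumXPow]
  | succ n =>
    rw [map_add, coeff_succ_mul_X, coeff_sumXPow, coeff_sumXPow, Finset.sum_range_succ', add_comm]
    simp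

theorem sumXPow_mul (g : ℕ → A⟦X⟧) (f : A⟦X⟧) :
    sumXPow g * f = sumXPow (fun m => g m * f) := by
  ext n
  simp only [coeff_mul, coeff_sumXPow, Finset.Nat.sum_antidiagonal_eq_sum_range_succ_mk,
    Finset.sum_mul]
  calc ∑ m ∈ Finset.range (n + 1), ∑ i ∈ Finset.range (m + 1),
          coeff (m - i) (g i) * coeff (n - m) f
      = ∑ m ∈ Finset.range (n + 1), ∑ i ∈ Finset.range (m + 1),
          coeff (m - i) (g i) * coeff (n - i - (m - i)) f := by
        refine Finset.sum_congr rfl fun m _ => Finset.sum_congr rfl fun i hi => ?_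
        rw [Finset.mem_range] at hi
        rw [show n - i - (m - i) = n - m by omega]
    _ = ∑ i ∈ Finset.range (n + 1), ∑ j ∈ Finset.range (n - i + 1),
          coeff j (g i) * coeff (n - i - j) f := by
        rw [Finset.sum_range_diag_flip (n + 1) fun i j => coeff j (g i) * coeff (n - i - j) f]
        refine Finset.sum_congr rfl fun i hi => ?_
        rw [Finset.mem_range] at hi
        rw [show n + 1 - i = n - i + 1 by omega]

theorem isUnit_one_sub_mul_X (f : A⟦X⟧) : IsUnit (1 - f * X) := by
  simp [isUnit_iff_constantCoeff]

theorem C_smul (r : R) (a : A) : C (r • a) = r • C a := by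
  ext n
  simp only [coeff_C, coeff_smul]
  split_ifs <;> simp

section TwistedQBinomial

variable (q : R) (B : ℕ → A⟦X⟧) (c : A)

noncomputable def qBinomialTerm (k m : ℕ) : A⟦X⟧ :=
  qChoose q (k + m - 1) m • (((List.range m).map B).prod * C (c ^ m))

variable {B c}

theorem C_pow_mul_of_twist (hB : ∀ r, C c * B r = B (r + 1) * C c) (m r : ℕ) :
    C (c ^ m) * B r = B (r + m) * C (c ^ m) := by
  induction m generalizing r with
  | zero => simp
  | succ m ih =>
    rw [pow_succ', map_mul, mul_assoc, ih, ← mul_assoc, hB, mul_assoc, ← map_mul, ← pow_succ',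
      add_assoc]

theorem qBinomialTerm_succ_sub (hB : ∀ r, C c * B r = B (r + 1) * C c) (k m : ℕ) :
    qBinomialTerm q B c (k + 1) (m + 1) - qBinomialTerm q B c (k + 1) m * (B 0 * C (q ^ k • c)) =
      qBinomialTerm q B c k (m + 1) := by
  have hS : ((List.range m).map B).prod * C (c ^ m) * (B 0 * C c) =
      ((List.range (m + 1)).map B).prod * C (c ^ (m + 1)) := by
    rw [mul_assoc, ← mul_assoc (C _), C_pow_mul_of_twist hB, zero_add, List.prod_range_succ,
      mul_assoc, mul_assoc, ← map_mul, ← pow_succ]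
  simp only [qBinomialTerm, C_smul, smul_mul_assoc, mul_smul_comm, hS, smul_smul, ← sub_smul]
  rw [show k + 1 + (m + 1) - 1 = k + m + 1 by omega, show k + 1 + m - 1 = k + m by omega,
    show k + (m + 1) - 1 = k + m by omega, qChoose_add_succ_succ]
  congr 1
  ring

theorem prod_inverse_one_sub_eq_sumXPow (hB : ∀ r, C c * B r = B (r + 1) * C c) (k : ℕ) :
    ((List.range k).map fun j => Ring.inverse (1 - B 0 * (C (q ^ j • c) * X))).prod =
      sumXPow (qBinomialTerm q B c k) := by
  induction k with
  | zero =>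
    rw [sumXPow_eq_add_sumXPow_succ_mul_X]
    simp [qBinomialTerm, qChoose_zero_right, qChoose_eq_zero_of_lt, sumXPow_zero]
  | succ k ih =>
    set Y := B 0 * (C (q ^ k • c) * X)
    have hY : Y = B 0 * C (q ^ k • c) * X := (mul_assoc _ _ _).symm
    have hdiff : sumXPow (qBinomialTerm q B c (k + 1)) * (1 - Y) =
        sumXPow (qBinomialTerm q B c k) := by
      rw [mul_one_sub, hY, ← mul_assoc, sumXPow_mul, sumXPow_eq_add_sumXPow_succ_mul_X,
        sumXPow_eq_add_sumXPow_succ_mul_X (qBinomialTerm q B c k), add_sub_assoc, ← sub_mul,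
        ← sumXPow_sub]
      simp only [qBinomialTerm_succ_sub q hB]
      congr 1
      simp [qBinomialTerm, qChoose_zero_right]
    have hunit : IsUnit (1 - Y) := hY ▸ isUnit_one_sub_mul_X _
    rw [List.prod_range_succ, ih, ← hdiff, mul_assoc, Ring.mul_inverse_cancel _ hunit, mul_one]

end TwistedQBinomial

end PowerSeries

section NestedFraction

open PowerSeries

variable {R : Type*} [CommRing R] {A : Type*} [Ring A] [Algebra R A] (q : R) {N : ℕ}

noncomputable def nestSeries (t : Fin N → A) : A⟦X⟧ :=
  nest (List.ofFn fun i => PowerSeries.C (t i) * X)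

def scaleHead (r : R) (t : Fin N → A) : Fin N → A :=
  fun i => if (i : ℕ) = 0 then r • t i else t i

theorem nestSeries_zero (t : Fin 0 → A) : nestSeries t = 1 := rfl

theorem nestSeries_succ (t : Fin (N + 1) → A) :
    nestSeries t = Ring.inverse (1 - nestSeries (Fin.tail t) * (PowerSeries.C (t 0) * X)) := by
  rw [nestSeries, List.ofFn_succ]
  rfl

theorem scaleHead_one (t : Fin N → A) : scaleHead (1 : R) t = t := by
  ext i
  simp [scaleHead]

theorem scaleHead_zero (r : R) (t : Fin (N + 1) → A) : scaleHead r t 0 = r • t 0 := by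
  simp [scaleHead]

theorem tail_scaleHead (r : R) (t : Fin (N + 1) → A) : Fin.tail (scaleHead r t) = Fin.tail t := by
  ext i
  simp [scaleHead, Fin.tail]

theorem C_mul_nestSeries_scaleHead {c : A} {u : Fin N → A}
    (hhead : ∀ i : Fin N, (i : ℕ) = 0 → c * u i = q • (u i * c))
    (htail : ∀ i : Fin N, (i : ℕ) ≠ 0 → Commute c (u i)) (r : ℕ) :
    PowerSeries.C c * nestSeries (scaleHead (q ^ r) u) =
      nestSeries (scaleHead (q ^ (r + 1)) u) * PowerSeries.C c := by
  cases N with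
  | zero => simp [nestSeries_zero]
  | succ N =>
    have hX : Commute (PowerSeries.C c) X := commute_X _
    have h0 : SemiconjBy c (q ^ r • u 0) (q ^ (r + 1) • u 0) := by
      rw [SemiconjBy, mul_smul_comm, hhead 0 rfl, smul_smul, ← pow_succ, smul_mul_assoc]
    rw [nestSeries, nestSeries, List.ofFn_succ, List.ofFn_succ]
    simp only [scaleHead, Fin.val_succ, Nat.add_one_ne_zero, if_false]
    refine SemiconjBy.nest_cons ?_ ((h0.map PowerSeries.C).mul_right hX) ?_ ?_
    · simp only [List.mem_ofFn, forall_exists_index, forall_apply_eq_imp_iff]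
      exact fun i => ((htail i.succ (Nat.succ_ne_zero _)).map PowerSeries.C).mul_right hX
    all_goals rw [← mul_assoc]; exact isUnit_one_sub_mul_X _

structure IsQCommChain (t : Fin N → A) : Prop where
  adj : ∀ (i : ℕ) (hi : i < N) (hi1 : i + 1 < N),
    t ⟨i, hi⟩ * t ⟨i + 1, hi1⟩ = q • (t ⟨i + 1, hi1⟩ * t ⟨i, hi⟩)
  far : ∀ i j : Fin N, 2 ≤ |((i : ℕ) : ℤ) - ((j : ℕ) : ℤ)| → t i * t j = t j * t i

namespace IsQCommChain

variable {q} {t : Fin (N + 1) → A} (h : IsQCommChain q t)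
include h

theorem tail : IsQCommChain q (Fin.tail t) where
  adj i hi hi1 := h.adj (i + 1) (by omega) (by omega)
  far i j hij := h.far i.succ j.succ (by simpa using hij)

theorem head_mul_tail (i : Fin N) (hi : (i : ℕ) = 0) :
    t 0 * Fin.tail t i = q • (Fin.tail t i * t 0) := by
  obtain ⟨_, hlt⟩ := i
  subst hi
  exact h.adj 0 (Nat.succ_pos N) (Nat.succ_lt_succ hlt)

theorem commute_head_tail (i : Fin N) (hi : (i : ℕ) ≠ 0) : Commute (t 0) (Fin.tail t i) :=
  h.far 0 i.succ (le_abs.2 (Or.inr (by simp; omega)))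

end IsQCommChain

def revMonomial (t : Fin N → A) (a : Fin N → ℕ) : A :=
  (List.ofFn fun i => t i.rev ^ a i.rev).prod

theorem revMonomial_cons (t : Fin (N + 1) → A) (m : ℕ) (b : Fin N → ℕ) :
    revMonomial t (Fin.cons m b) = revMonomial (Fin.tail t) b * t 0 ^ m := by
  rw [revMonomial, List.ofFn_succ', List.prod_concat]
  simp [revMonomial, Fin.rev_castSucc, Fin.tail]

noncomputable def nestSeriesProd (t : Fin N → A) (k : ℕ) : A⟦X⟧ :=
  ((List.range k).map fun j => nestSeries (scaleHead (q ^ j) t)).prod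

noncomputable def fqSeries (t : Fin N → A) (k : ℕ) : A⟦X⟧ :=
  mk fun n => ∑ a ∈ Finset.Nat.antidiagonalTuple N n,
    Fq q (Fin.cons k a : Fin (N + 1) → ℕ) • revMonomial t a

theorem fqSeries_zero (t : Fin 0 → A) (k : ℕ) : fqSeries q t k = 1 := by
  ext n
  cases n with
  | zero => simp [fqSeries, Fq_singleton, revMonomial]
  | succ n => simp [fqSeries]

theorem fqSeries_succ (t : Fin (N + 1) → A) (k : ℕ) :
    fqSeries q t k = sumXPow fun m =>
      qChoose q (k + m - 1) m • (fqSeries q (Fin.tail t) m * PowerSeries.C (t 0 ^ m)) := by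
  ext n
  rw [coeff_sumXPow, fqSeries, coeff_mk, Finset.Nat.sum_antidiagonalTuple_succ]
  refine Finset.sum_congr rfl fun m _ => ?_
  rw [coeff_smul, coeff_mul_C, fqSeries, coeff_mk, Finset.sum_mul, Finset.smul_sum]
  refine Finset.sum_congr rfl fun b _ => ?_
  rw [Fq_cons_cons, revMonomial_cons, mul_smul, smul_mul_assoc]

theorem nestSeriesProd_eq_fqSeries (t : Fin N → A) (h : IsQCommChain q t) (k : ℕ) :
    nestSeriesProd q t k = fqSeries q t k := by
  induction N generalizing k with
  | zero => simp [nestSeriesProd, nestSeries_zero, fqSeries_zero]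
  | succ N ih =>
    set B : ℕ → A⟦X⟧ := fun r => nestSeries (scaleHead (q ^ r) (Fin.tail t))
    have hB : ∀ r, PowerSeries.C (t 0) * B r = B (r + 1) * PowerSeries.C (t 0) :=
      C_mul_nestSeries_scaleHead q h.head_mul_tail h.commute_head_tail
    calc nestSeriesProd q t k
        = ((List.range k).map fun j =>
            Ring.inverse (1 - B 0 * (PowerSeries.C (q ^ j • t 0) * X))).prod := by
          simp only [nestSeriesProd, nestSeries_succ, tail_scaleHead, scaleHead_zero, B, pow_zero,
            scaleHead_one]
      _ = sumXPow (qBinomialTerm q B (t 0) k) := prod_inverse_one_sub_eq_sumXPow q hB k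
      _ = fqSeries q t k := by
          rw [fqSeries_succ]
          simp only [← ih (Fin.tail t) h.tail]
          rfl

end NestedFraction

/-- Each `t_i` carries the central formal variable `X`, so the coefficient of `X^n` collects the
terms with `|α| = n`. -/
theorem statement2 {A : Type*} [Ring A] [Algebra Rq A] (N : ℕ) (t : Fin N → A)
    (hadj : ∀ (i : ℕ) (hi : i < N) (hi1 : i + 1 < N),
      t ⟨i, hi⟩ * t ⟨i + 1, hi1⟩ = (T 1 : Rq) • (t ⟨i + 1, hi1⟩ * t ⟨i, hi⟩))
    (hfar : ∀ i j : Fin N, 2 ≤ |((i : ℕ) : ℤ) - ((j : ℕ) : ℤ)| → t i * t j = t j * t i) :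
    nest (List.ofFn fun i : Fin N => PowerSeries.C (t i) * PowerSeries.X) =
      PowerSeries.mk (fun n => ∑ a ∈ Finset.Nat.antidiagonalTuple N n,
        algebraMap Rq A (Fq (T 1 : Rq) a) *
          (List.ofFn fun i : Fin N => t i.rev ^ a i.rev).prod) := by
  have h := nestSeriesProd_eq_fqSeries (T 1 : Rq) t ⟨hadj, hfar⟩ 1
  simp only [nestSeriesProd, List.range_one, List.map_singleton, List.prod_singleton, pow_zero,
    scaleHead_one] at h
  rw [← nestSeries, h, fqSeries]
  simp only [Fq_cons_one, revMonomial, Algebra.smul_def]
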